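/- Lemma (Lemma 7, invariant on RB): In any execution of Algorithm 1 starting from the initial configuration (all agents colored ini, base station variable RB = r), every configuration satisfies either (#r − #b = 1 and RB = b) or (#r − #b = 0 and RB = r). -/

import Mathlib

/-- Agent colors of Algorithm 1. -/
inductive Col : Type
  | ini | r | b
deriving DecidableEq

/-- Base-station variable `RB`. -/
inductive RB : Type
  | r | b
deriving DecidableEq

/-- Flip the base-station variable. -/
def RB.flip : RB → RB
  | .r => .b
  | .b => .r

/-- The color assigned by the base station. -/
def RB.toCol : RB → Col
  | .r => .r
  | .b => .b

/-- An agent state: a color and a depth (`none` is ⊥). -/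
abbrev AgSt := Col × Option ℕ

/-- Effect of an interaction between the base station and one agent. -/
def bsStep (rb : RB) (a : AgSt) : RB × AgSt :=
  match a with
  | (.ini, some 1) => (rb.flip, (rb.toCol, some 1))
  | (c, none)      => (rb, (c, some 1))
  | a              => (rb, a)

/-- Effect of an interaction between two agents x and y:
first the depth propagation, then the color swap towards a smaller depth. -/
def agStep (x y : AgSt) : AgSt × AgSt :=
  let d : Option ℕ × Option ℕ :=
    match x.2, y.2 with
    | none, some e => (some (e + 1), some e)
    | some e, none => (some e, some (e + 1))
    | dx, dy       => (dx, dy)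
  match d with
  | (some dx, some dy) =>
      if dx < dy ∧ y.1 = Col.ini then ((Col.ini, some dx), (x.1, some dy))
      else if dy < dx ∧ x.1 = Col.ini then ((y.1, some dx), (Col.ini, some dy))
      else ((x.1, some dx), (y.1, some dy))
  | (dx, dy) => ((x.1, dx), (y.1, dy))

/-- A configuration: the base-station variable together with the agents' states. -/
abbrev Conf (n : ℕ) := RB × (Fin n → AgSt)

/-- One step of Algorithm 1 on a communication graph: either the base station
interacts with an adjacent agent, or two adjacent distinct agents interact. -/
def Step {n : ℕ} (Adj : Fin n → Fin n → Prop) (BAdj : Fin n → Prop)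
    (c c' : Conf n) : Prop :=
  (∃ i : Fin n, BAdj i ∧ c'.1 = (bsStep c.1 (c.2 i)).1 ∧
      c'.2 = Function.update c.2 i (bsStep c.1 (c.2 i)).2) ∨
  (c'.1 = c.1 ∧ ∃ i j : Fin n, i ≠ j ∧ Adj i j ∧
      c'.2 = Function.update (Function.update c.2 i (agStep (c.2 i) (c.2 j)).1) j
        (agStep (c.2 i) (c.2 j)).2)

/-- Number of agents whose color is `x`. -/
def cnt {n : ℕ} (C : Fin n → AgSt) (x : Col) : ℕ :=
  (Finset.univ.filter fun a => (C a).1 = x).card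

/-! Give each color the charge `r ↦ 1`, `b ↦ -1`, `ini ↦ 0` and the base station the charge
`r ↦ 0`, `b ↦ 1`. Agent–agent interactions only keep or swap the two colors, and a base-station
interaction that colors an agent `ini ↦ RB` flips `RB`, which changes both sides by the same amount.
So the total charge of the agents always equals the charge of the base station, which is the
claimed dichotomy. -/

theorem Fintype.sum_update {ι M : Type*} [Fintype ι] [DecidableEq ι] [AddCommGroup M]
    (f : ι → M) (i : ι) (b : M) :
    ∑ k, Function.update f i b k = ∑ k, f k - f i + b := by
  rw [Finset.sum_update_of_mem (Finset.mem_univ i),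
    Finset.sum_eq_sum_sdiff_singleton_add (Finset.mem_univ i) f]
  abel

def Col.charge : Col → ℤ
  | .ini => 0
  | .r => 1
  | .b => -1

def RB.charge : RB → ℤ
  | .r => 0
  | .b => 1

def totalCharge {n : ℕ} (C : Fin n → AgSt) : ℤ :=
  ∑ k, (C k).1.charge

theorem totalCharge_eq_cnt_sub {n : ℕ} (C : Fin n → AgSt) :
    totalCharge C = cnt C .r - cnt C .b := by
  simp only [totalCharge, cnt, Finset.card_filter, Nat.cast_sum, Nat.cast_ite, Nat.cast_one,
    Nat.cast_zero, ← Finset.sum_sub_distrib]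
  refine Finset.sum_congr rfl fun k _ => ?_
  cases (C k).1 <;> rfl

theorem totalCharge_update {n : ℕ} (C : Fin n → AgSt) (i : Fin n) (a : AgSt) :
    totalCharge (Function.update C i a) = totalCharge C - (C i).1.charge + a.1.charge := by
  have h : (fun k => (Function.update C i a k).1.charge)
      = Function.update (fun k => (C k).1.charge) i a.1.charge := by
    funext k
    exact Function.apply_update (fun _ a => a.1.charge) C i a k
  simp only [totalCharge, h, Fintype.sum_update]

theorem bsStep_charge (rb : RB) (a : AgSt) :
    (bsStep rb a).2.1.charge - a.1.charge = (bsStep rb a).1.charge - rb.charge := by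
  obtain ⟨c, _ | _ | _ | d⟩ := a <;> cases c <;> cases rb <;> rfl

theorem agStep_colors (u v : AgSt) :
    ((agStep u v).1.1 = u.1 ∧ (agStep u v).2.1 = v.1) ∨
    ((agStep u v).1.1 = v.1 ∧ (agStep u v).2.1 = u.1) := by
  obtain ⟨cu, _ | du⟩ := u <;> obtain ⟨cv, _ | dv⟩ := v <;>
    simp only [agStep] <;> (try split_ifs) <;> simp_all

theorem agStep_charge (u v : AgSt) :
    (agStep u v).1.1.charge + (agStep u v).2.1.charge = u.1.charge + v.1.charge := by
  rcases agStep_colors u v with ⟨h₁, h₂⟩ | ⟨h₁, h₂⟩ <;> rw [h₁, h₂]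
  exact add_comm _ _

def ChargeBalanced {n : ℕ} (c : Conf n) : Prop :=
  totalCharge c.2 = c.1.charge

theorem ChargeBalanced.step {n : ℕ} {Adj : Fin n → Fin n → Prop} {BAdj : Fin n → Prop}
    {c c' : Conf n} (hc : ChargeBalanced c) (h : Step Adj BAdj c c') : ChargeBalanced c' := by
  unfold ChargeBalanced at hc ⊢
  rcases h with ⟨i, -, h₁, h₂⟩ | ⟨h₁, i, j, hij, -, h₂⟩
  · have := bsStep_charge c.1 (c.2 i)
    rw [h₂, totalCharge_update, h₁, hc]
    linarith
  · have := agStep_charge (c.2 i) (c.2 j)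
    rw [h₂, totalCharge_update, totalCharge_update,
      Function.update_of_ne hij.symm, h₁, hc]
    linarith

theorem chargeBalanced_iff {n : ℕ} (c : Conf n) :
    ChargeBalanced c ↔
      (cnt c.2 .r = cnt c.2 .b + 1 ∧ c.1 = RB.b) ∨ (cnt c.2 .r = cnt c.2 .b ∧ c.1 = RB.r) := by
  rw [ChargeBalanced, totalCharge_eq_cnt_sub]
  rcases c.1 with _ | _ <;> simp only [RB.charge, reduceCtorEq, and_true, and_false,
    or_false, false_or] <;> omega

theorem stmt14 (n : ℕ) (Adj : Fin n → Fin n → Prop) (BAdj : Fin n → Prop)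
    (C : Conf n)
    (hreach : Relation.ReflTransGen (Step Adj BAdj)
      (RB.r, fun _ => (Col.ini, none)) C) :
    (cnt C.2 .r = cnt C.2 .b + 1 ∧ C.1 = RB.b) ∨
    (cnt C.2 .r = cnt C.2 .b ∧ C.1 = RB.r) := by
  rw [← chargeBalanced_iff]
  induction hreach with
  | refl => simp [ChargeBalanced, totalCharge, Col.charge, RB.charge]
  | tail _ hstep ih => exact ih.step hstep
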